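/- arXiv:1405.2432 — 2 statements merged into one kernel-verified Lean document; each statement's English description precedes it below -/
import Mathlib

section
/- Let K ≥ 2 and L ≥ 1 be integers, x_1, …, x_L nonnegative integers with x_1 + ⋯ + x_L = K − 1, H = L·K − Σ_{l=1}^{L} x_l·(L − l), and |S_l| = K − Σ_{j=1}^{l−1} x_j. Let T > H > 0 and d > 0 be reals, and let Q : ℝ → ℝ be nonnegative and antitone (monotone decreasing). Suppose real numbers e_p(1), …, e_p(L) satisfy e_p(l) ≤ 2·(|S_l| − x_l)·Q(l·(T − H)/H) for every l, and a real number e_r satisfies e_r ≤ Σ_{l=1}^{L} e_p(l). Then e_r ≤ 2·(H − K + 1)·Q((T − H)/H). -/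
/-!
Since `Q` is antitone and `l · (T - H)/H ≥ (T - H)/H` for `l ≥ 1`, every round is bounded by
`2 (|S_l| - x_l) · Q((T - H)/H)`. The surviving counts `|S_l| - x_l = K - ∑_{j ≤ l} x_j` are
nonnegative, and exchanging the order of summation gives
`∑_l (|S_l| - x_l) = L K - ∑_j x_j (L - j + 1) = H - ∑_j x_j = H - K + 1`.
-/

open Finset

theorem sum_Icc_one_sum_Icc_one {M : Type*} [AddCommMonoid M] (a : ℕ → M) (L : ℕ) :
    ∑ l ∈ Icc 1 L, ∑ j ∈ Icc 1 l, a j = ∑ j ∈ Icc 1 L, (L + 1 - j) • a j := by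
  rw [sum_comm' (t' := Icc 1 L) (s' := fun j => Icc j L)]
  · simp only [sum_const, Nat.card_Icc]
  · intro l j
    simp only [mem_Icc]
    omega

theorem sum_Icc_one_pred_add {M : Type*} [AddCommMonoid M] (a : ℕ → M) {l : ℕ} (hl : 1 ≤ l) :
    ∑ j ∈ Icc 1 (l - 1), a j + a l = ∑ j ∈ Icc 1 l, a j := by
  obtain ⟨m, rfl⟩ : ∃ m, l = m + 1 := ⟨l - 1, by omega⟩
  rw [Nat.add_sub_cancel, sum_Icc_succ_top (by omega)]

theorem sum_Icc_one_sub_partialSum (K : ℝ) (a : ℕ → ℝ) (L : ℕ) :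
    ∑ l ∈ Icc 1 L, (K - ∑ j ∈ Icc 1 l, a j)
      = L * K - ∑ l ∈ Icc 1 L, a l * (L - l) - ∑ l ∈ Icc 1 L, a l := by
  have hweights : ∀ j ∈ Icc 1 L, (L + 1 - j) • a j = a j * (L - j) + a j := by
    intro j hj
    rw [nsmul_eq_mul, Nat.cast_sub (by simp only [mem_Icc] at hj; omega)]
    push_cast
    ring
  rw [sum_sub_distrib, sum_Icc_one_sum_Icc_one, sum_congr rfl hweights, sum_add_distrib,
    sum_const, Nat.card_Icc, nsmul_eq_mul, Nat.add_sub_cancel]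
  ring

theorem stmt2_general (K L : ℕ)
    (x : ℕ → ℕ) (hx : ∑ l ∈ Finset.Icc 1 L, x l = K - 1)
    (H : ℝ) (hH : H = (L : ℝ) * K - ∑ l ∈ Finset.Icc 1 L, (x l : ℝ) * ((L : ℝ) - l))
    (S : ℕ → ℝ) (hS : ∀ l, S l = (K : ℝ) - ∑ j ∈ Finset.Icc 1 (l - 1), (x j : ℝ))
    (T : ℝ) (hH0 : 0 < H) (hTH : T > H)
    (Q : ℝ → ℝ) (hQ0 : ∀ y, 0 ≤ Q y) (hQ : Antitone Q)
    (ep : ℕ → ℝ) (er : ℝ)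
    (hep : ∀ l ∈ Finset.Icc 1 L, ep l ≤ 2 * (S l - x l) * Q ((l : ℝ) * (T - H) / H))
    (her : er ≤ ∑ l ∈ Finset.Icc 1 L, ep l) :
    er ≤ 2 * (H - (K : ℝ) + 1) * Q ((T - H) / H) := by
  have hSx : ∀ l ∈ Icc 1 L, S l - x l = K - ∑ j ∈ Icc 1 l, (x j : ℝ) := by
    intro l hl
    rw [hS, ← sum_Icc_one_pred_add _ (mem_Icc.mp hl).1]
    ring
  have hxK : (K : ℝ) - 1 ≤ ∑ l ∈ Icc 1 L, (x l : ℝ) ∧ ∑ l ∈ Icc 1 L, (x l : ℝ) ≤ K := by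
    rw [← Nat.cast_sum, hx]
    constructor
    · have : (K : ℝ) ≤ (K - 1 : ℕ) + 1 := by exact_mod_cast (by omega : K ≤ K - 1 + 1)
      linarith
    · exact_mod_cast Nat.sub_le K 1
  have hround : ∀ l ∈ Icc 1 L, ep l ≤ 2 * (S l - x l) * Q ((T - H) / H) := by
    intro l hl
    have hsurvivors : 0 ≤ S l - x l := by
      rw [hSx l hl]
      have : ∑ j ∈ Icc 1 l, (x j : ℝ) ≤ ∑ j ∈ Icc 1 L, (x j : ℝ) :=
        sum_le_sum_of_subset_of_nonneg (Icc_subset_Icc_right (mem_Icc.mp hl).2)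
          fun _ _ _ => Nat.cast_nonneg _
      linarith [hxK.2]
    have hlate : (T - H) / H ≤ l * (T - H) / H := by
      rw [mul_div_assoc]
      exact le_mul_of_one_le_left (div_pos (sub_pos.mpr hTH) hH0).le
        (by exact_mod_cast (mem_Icc.mp hl).1)
    exact (hep l hl).trans (mul_le_mul_of_nonneg_left (hQ hlate) (by linarith))
  have hsurvivors_sum : ∑ l ∈ Icc 1 L, (S l - x l) ≤ H - K + 1 := by
    rw [sum_congr rfl hSx, sum_Icc_one_sub_partialSum, ← hH]
    linarith [hxK.1]
  calc er ≤ ∑ l ∈ Icc 1 L, ep l := her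
    _ ≤ ∑ l ∈ Icc 1 L, 2 * (S l - x l) * Q ((T - H) / H) := sum_le_sum hround
    _ = 2 * (∑ l ∈ Icc 1 L, (S l - x l)) * Q ((T - H) / H) := by rw [mul_sum, sum_mul]
    _ ≤ 2 * (H - K + 1) * Q ((T - H) / H) := by gcongr; exact hQ0 _

/-- **Main error bound of Batch Elimination.** With `H = L·K - ∑ x_l·(L-l)`,
`|S_l| = K - ∑_{j<l} x_j`, a nonnegative antitone tail bound `Q`, per-round elimination
probabilities `ep l ≤ 2(|S_l| - x_l)·Q(l(T-H)/H)` and recommendation error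
`er ≤ ∑ ep l`, we get `er ≤ 2(H - K + 1)·Q((T-H)/H)`. -/
theorem stmt2 (K L : ℕ) (hK : 2 ≤ K) (hL : 1 ≤ L)
    (x : ℕ → ℕ) (hx : ∑ l ∈ Finset.Icc 1 L, x l = K - 1)
    (H : ℝ) (hH : H = (L : ℝ) * K - ∑ l ∈ Finset.Icc 1 L, (x l : ℝ) * ((L : ℝ) - l))
    (S : ℕ → ℝ) (hS : ∀ l, S l = (K : ℝ) - ∑ j ∈ Finset.Icc 1 (l - 1), (x j : ℝ))
    (T d : ℝ) (hH0 : 0 < H) (hTH : T > H) (hd : 0 < d)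
    (Q : ℝ → ℝ) (hQ0 : ∀ y, 0 ≤ Q y) (hQ : Antitone Q)
    (ep : ℕ → ℝ) (er : ℝ)
    (hep : ∀ l ∈ Finset.Icc 1 L, ep l ≤ 2 * (S l - x l) * Q ((l : ℝ) * (T - H) / H))
    (her : er ≤ ∑ l ∈ Finset.Icc 1 L, ep l) :
    er ≤ 2 * (H - (K : ℝ) + 1) * Q ((T - H) / H) :=
  stmt2_general K L x hx H hH S hS T hH0 hTH Q hQ0 hQ ep er hep her
end

section
/- Let X_1, …, X_N (N ≥ 2) be i.i.d. real-valued random variables with A ≤ X_k ≤ B almost surely (A < B). Let μ̂ = (1/N)·Σ_{k=1}^N X_k be the sample mean, σ² = Var(X_1), and σ̂² = (1/(N−1))·Σ_{k=1}^N (X_k − μ̂)² the unbiased variance estimator. Then for every ε > 0, P(|σ̂² − σ²| > ε) ≤ 2·exp(− 2·(N−1)²·ε² / (N·(B−A)⁴)). -/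
/-!
Replacing one sample by another point of `[A, B]` changes `∑ (X k - μ̂)²` by at most `(B - A)²`:
the sum of squared deviations about the sample mean is the minimum over all centres `c` of
`∑ (X k - c)²`, and moving the centre to the other sample's mean only costs the one changed term.
So `σ̂²` has bounded differences `(B - A)² / (N - 1)`, and McDiarmid's inequality (proved by
integrating out one coordinate at a time, with Hoeffding's lemma on each slice) makes
`σ̂² - E σ̂²` sub-Gaussian with variance proxy `N ((B - A)² / (N - 1))² / 4`. Since the estimator
is unbiased, `E σ̂² = σ²`, and the Chernoff bound on both tails gives the claim.
-/

open MeasureTheory ProbabilityTheory Real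
open scoped NNReal

section SubGaussian

variable {α β : Type*} [MeasurableSpace α] [MeasurableSpace β]

lemma ProbabilityTheory.HasSubgaussianMGF.measureReal_abs_ge_le {μ : Measure α}
    [IsFiniteMeasure μ] {X : α → ℝ} {c : ℝ≥0} (h : HasSubgaussianMGF X c μ) {ε : ℝ} (hε : 0 ≤ ε) :
    μ.real {ω | ε ≤ |X ω|} ≤ 2 * exp (-ε ^ 2 / (2 * c)) := by
  have hsub : {ω | ε ≤ |X ω|} ⊆ {ω | ε ≤ X ω} ∪ {ω | ε ≤ (-X) ω} := fun ω hω =>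
    show ε ≤ X ω ∨ ε ≤ -X ω from le_abs.1 hω
  calc μ.real {ω | ε ≤ |X ω|}
      ≤ μ.real {ω | ε ≤ X ω} + μ.real {ω | ε ≤ (-X) ω} :=
        (measureReal_mono hsub).trans (measureReal_union_le _ _)
    _ ≤ exp (-ε ^ 2 / (2 * c)) + exp (-ε ^ 2 / (2 * c)) :=
        add_le_add (h.measure_ge_le hε) (h.neg.measure_ge_le hε)
    _ = 2 * exp (-ε ^ 2 / (2 * c)) := by ring

lemma integrable_of_abs_sub_le {μ : Measure α} [IsProbabilityMeasure μ] {F : α → ℝ}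
    (hF : AEStronglyMeasurable F μ) {C : ℝ} (hC : ∀ a a', |F a - F a'| ≤ C) : Integrable F μ := by
  obtain ⟨a₀⟩ := nonempty_of_isProbabilityMeasure μ
  refine Integrable.of_bound hF (|F a₀| + C) (ae_of_all _ fun a => ?_)
  rw [Real.norm_eq_abs]
  linarith [abs_sub_abs_le_abs_sub (F a) (F a₀), hC a a₀]

lemma hasSubgaussianMGF_sub_integral_of_abs_sub_le {μ : Measure α} [IsProbabilityMeasure μ]
    {F : α → ℝ} (hF : AEMeasurable F μ) {c : ℝ≥0} (hc : ∀ a a', |F a - F a'| ≤ c) :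
    HasSubgaussianMGF (fun a => F a - μ[F]) ((c / 2) ^ 2) μ := by
  have : Nonempty α := nonempty_of_isProbabilityMeasure μ
  have hbdd : BddBelow (Set.range F) := ⟨F (Classical.arbitrary α) - c, by
    rintro _ ⟨a, rfl⟩; linarith [(abs_le.1 (hc (Classical.arbitrary α) a)).2]⟩
  have hmem : ∀ a, F a ∈ Set.Icc (⨅ a, F a) ((⨅ a, F a) + c) := fun a =>
    ⟨ciInf_le hbdd a, by
      linarith [le_ciInf fun a' => show F a - c ≤ F a' by linarith [(abs_le.1 (hc a a')).2]]⟩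
  convert hasSubgaussianMGF_of_mem_Icc hF (ae_of_all _ hmem) using 3
  ext
  simp

lemma ProbabilityTheory.HasSubgaussianMGF.prod_add {μ : Measure α} {ν : Measure β} [SFinite μ]
    [SFinite ν] {D : α × β → ℝ} (hD : Measurable D) {cD cG : ℝ≥0}
    (hDs : ∀ y, HasSubgaussianMGF (fun a => D (a, y)) cD μ) {G : β → ℝ}
    (hG : HasSubgaussianMGF G cG ν) :
    HasSubgaussianMGF (fun p => D p + G p.2) (cD + cG) (μ.prod ν) := by
  have hsection : ∀ t y, ∫ a, exp (t * (D (a, y) + G y)) ∂μ =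
      mgf (fun a => D (a, y)) μ t * exp (t * G y) := fun t y => by
    simp_rw [mul_add, exp_add]
    exact integral_mul_const _ _
  have hsection_le : ∀ t y, mgf (fun a => D (a, y)) μ t * exp (t * G y) ≤
      exp (cD * t ^ 2 / 2) * exp (t * G y) := fun t y => by
    gcongr
    exact (hDs y).mgf_le t
  have hsection_int : ∀ t, Integrable (fun y => mgf (fun a => D (a, y)) μ t * exp (t * G y)) ν :=
    fun t => Integrable.mono' ((hG.integrable_exp_mul t).const_mul _)
      ((measurable_exp.comp (hD.const_mul t)).stronglyMeasurable.integral_prod_left'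
        |>.aestronglyMeasurable.mul (hG.aemeasurable.const_mul t).exp.aestronglyMeasurable)
      (ae_of_all _ fun y => by
        rw [Real.norm_of_nonneg (mul_nonneg mgf_nonneg (exp_nonneg _))]
        exact hsection_le t y)
  have hint : ∀ t, Integrable (fun p => exp (t * (D p + G p.2))) (μ.prod ν) := fun t => by
    have hmeas : AEStronglyMeasurable (fun p => exp (t * (D p + G p.2))) (μ.prod ν) :=
      ((hD.aemeasurable.add hG.aemeasurable.comp_snd).const_mul t).exp.aestronglyMeasurable
    rw [integrable_prod_iff' hmeas]
    refine ⟨ae_of_all _ fun y => ?_, ?_⟩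
    · simp_rw [mul_add, exp_add]
      exact ((hDs y).integrable_exp_mul t).mul_const _
    · simp_rw [Real.norm_of_nonneg (exp_nonneg _), hsection t]
      exact hsection_int t
  refine ⟨hint, fun t => ?_⟩
  calc mgf (fun p => D p + G p.2) (μ.prod ν) t
      = ∫ y, mgf (fun a => D (a, y)) μ t * exp (t * G y) ∂ν := by
        rw [mgf, integral_prod_symm _ (hint t)]
        simp_rw [hsection t]
    _ ≤ ∫ y, exp (cD * t ^ 2 / 2) * exp (t * G y) ∂ν :=
        integral_mono (hsection_int t) ((hG.integrable_exp_mul t).const_mul _) (hsection_le t)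
    _ = exp (cD * t ^ 2 / 2) * mgf G ν t := integral_const_mul _ _
    _ ≤ exp (cD * t ^ 2 / 2) * exp (cG * t ^ 2 / 2) := by
        gcongr
        exact hG.mgf_le t
    _ = exp (↑(cD + cG) * t ^ 2 / 2) := by
        rw [← exp_add]
        push_cast
        ring_nf

end SubGaussian

def HasBoundedDifferences {ι : Type*} {α : ι → Type*} (f : (∀ i, α i) → ℝ) (c : ι → ℝ≥0) : Prop :=
  ∀ i x x', (∀ j, j ≠ i → x j = x' j) → |f x - f x'| ≤ c i

namespace HasBoundedDifferences

section Fintype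

variable {ι : Type*} [Fintype ι] {α : ι → Type*} {f : (∀ i, α i) → ℝ} {c : ι → ℝ≥0}

lemma abs_sub_le_sum (hf : HasBoundedDifferences f c) (x x' : ∀ i, α i) :
    |f x - f x'| ≤ ∑ i, c i := by
  classical
  suffices ∀ s : Finset ι, ∀ x x' : ∀ i, α i, (∀ j, j ∉ s → x j = x' j) →
      |f x - f x'| ≤ ∑ i ∈ s, c i from this _ x x' (by simp)
  intro s
  induction s using Finset.induction_on with
  | empty => intro x x' h; simp [funext fun j => h j (Finset.notMem_empty j)]
  | insert i s hi ih =>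
    intro x x' h
    have hx : |f x - f (Function.update x i (x' i))| ≤ c i :=
      hf i _ _ fun j hj => (Function.update_of_ne hj _ _).symm
    have hx' : |f (Function.update x i (x' i)) - f x'| ≤ ∑ i ∈ s, c i := by
      refine ih _ _ fun j hj => ?_
      rcases eq_or_ne j i with rfl | hji
      · simp
      · rw [Function.update_of_ne hji]
        exact h j (by simp [hji, hj])
    rw [Finset.sum_insert hi, NNReal.coe_add]
    exact (abs_sub_le _ _ _).trans (add_le_add hx hx')

end Fintype

variable {n : ℕ} {α : Fin (n + 1) → Type*} {f : (∀ i, α i) → ℝ} {c : Fin (n + 1) → ℝ≥0}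

lemma abs_insertNth_sub_le (hf : HasBoundedDifferences f c) (i : Fin (n + 1)) (a a' : α i)
    (y : ∀ j, α (i.succAbove j)) : |f (i.insertNth a y) - f (i.insertNth a' y)| ≤ c i := by
  refine hf i _ _ fun j hj => ?_
  obtain ⟨k, rfl⟩ := Fin.exists_succAbove_eq hj
  simp

lemma integral_insertNth [∀ i, MeasurableSpace (α i)] (hf : HasBoundedDifferences f c)
    (hfm : Measurable f) (i : Fin (n + 1)) (μ : Measure (α i)) [IsProbabilityMeasure μ] :
    HasBoundedDifferences (fun y => ∫ a, f (i.insertNth a y) ∂μ) fun j => c (i.succAbove j) := by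
  intro k y y' hyy'
  have hmeas : ∀ y, Measurable fun a => f (i.insertNth a y) := fun y =>
    hfm.comp ((MeasurableEquiv.piFinSuccAbove α i).symm.measurable.comp measurable_prodMk_right)
  have hint : ∀ y, Integrable (fun a => f (i.insertNth a y)) μ := fun y =>
    integrable_of_abs_sub_le (hmeas y).aestronglyMeasurable (hf.abs_insertNth_sub_le i · · y)
  have hpt : ∀ a, |f (i.insertNth a y) - f (i.insertNth a y')| ≤ c (i.succAbove k) := by
    refine fun a => hf _ _ _ fun j hj => ?_
    rcases eq_or_ne j i with rfl | hji
    · simp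
    · obtain ⟨m, rfl⟩ := Fin.exists_succAbove_eq hji
      simp only [Fin.insertNth_apply_succAbove]
      exact hyy' m fun hm => hj (hm ▸ rfl)
  rw [← integral_sub (hint y) (hint y')]
  simpa using norm_integral_le_of_norm_le_const (μ := μ)
    (f := fun a => f (i.insertNth a y) - f (i.insertNth a y')) (ae_of_all _ hpt)

/-- **McDiarmid's inequality**, in sub-Gaussian form. -/
theorem hasSubgaussianMGF {n : ℕ} {α : Fin n → Type*} [∀ i, MeasurableSpace (α i)]
    {f : (∀ i, α i) → ℝ} {c : Fin n → ℝ≥0} (hf : HasBoundedDifferences f c) (hfm : Measurable f)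
    (μ : ∀ i, Measure (α i)) [∀ i, IsProbabilityMeasure (μ i)] :
    HasSubgaussianMGF (fun x => f x - ∫ y, f y ∂Measure.pi μ) (∑ i, (c i / 2) ^ 2)
      (Measure.pi μ) := by
  induction n with
  | zero =>
    have hconst : ∀ x, f x - ∫ y, f y ∂Measure.pi μ = 0 := fun x => by
      simp [Subsingleton.elim _ x]
    simp [hconst]
  | succ n ih =>
    let e := MeasurableEquiv.piFinSuccAbove α 0
    let ν := Measure.pi fun j => μ (Fin.succAbove 0 j)
    let g := fun y => ∫ a, f (Fin.insertNth 0 a y) ∂μ 0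
    have he := measurePreserving_piFinSuccAbove μ 0
    have hfe : Measurable fun p => f (e.symm p) := hfm.comp e.symm.measurable
    have hgm : Measurable g := hfe.stronglyMeasurable.integral_prod_left'.measurable
    have hG := ih (hf.integral_insertNth hfm 0 (μ 0)) hgm fun j => μ (Fin.succAbove 0 j)
    have hD : ∀ y, HasSubgaussianMGF (fun a => f (Fin.insertNth 0 a y) - g y) ((c 0 / 2) ^ 2)
        (μ 0) := fun y =>
      hasSubgaussianMGF_sub_integral_of_abs_sub_le (hfe.comp measurable_prodMk_right).aemeasurable
        (hf.abs_insertNth_sub_le 0 · · y)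
    have hE : ∫ x, f x ∂Measure.pi μ = ∫ y, g y ∂ν := by
      have hint : Integrable (fun p => f (e.symm p)) ((μ 0).prod ν) :=
        integrable_of_abs_sub_le hfe.aestronglyMeasurable fun _ _ => hf.abs_sub_le_sum _ _
      calc ∫ x, f x ∂Measure.pi μ = ∫ x, f (e.symm (e x)) ∂Measure.pi μ := by
            simp_rw [e.symm_apply_apply]
        _ = ∫ p, f (e.symm p) ∂(μ 0).prod ν := he.integral_comp' fun p => f (e.symm p)
        _ = ∫ y, g y ∂ν := integral_prod_symm _ hint
    have hsum := HasSubgaussianMGF.prod_add (hfe.sub (hgm.comp measurable_snd)) hD hG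
    rw [← he.map_eq] at hsum
    rw [Fin.sum_univ_succAbove _ 0]
    refine (hsum.of_map e.measurable.aemeasurable).congr (ae_of_all _ fun x => ?_)
    show f (e.symm (e x)) - g (e x).2 + (g (e x).2 - ∫ y, g y ∂ν) = f x - ∫ y, f y ∂Measure.pi μ
    rw [e.symm_apply_apply, hE]
    ring

end HasBoundedDifferences

lemma HasBoundedDifferences.hasSubgaussianMGF_of_iIndepFun {Ω : Type*} [MeasurableSpace Ω]
    {P : Measure Ω} [IsProbabilityMeasure P] {n : ℕ} {α : Fin n → Type*}
    [∀ i, MeasurableSpace (α i)] {f : (∀ i, α i) → ℝ} {c : Fin n → ℝ≥0}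
    (hf : HasBoundedDifferences f c) (hfm : Measurable f) {Y : ∀ i, Ω → α i}
    (hY : ∀ i, Measurable (Y i)) (hindep : iIndepFun Y P) :
    HasSubgaussianMGF (fun ω => f (fun i => Y i ω) - P[fun ω => f (fun i => Y i ω)])
      (∑ i, (c i / 2) ^ 2) P := by
  have hT : Measurable fun ω i => Y i ω := measurable_pi_lambda _ hY
  have := fun i => Measure.isProbabilityMeasure_map (μ := P) (hY i).aemeasurable
  have h := hf.hasSubgaussianMGF hfm fun i => P.map (Y i)
  rw [← hindep.map_fun_eq_pi_map fun i => (hY i).aemeasurable,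
    integral_map hT.aemeasurable hfm.aestronglyMeasurable] at h
  exact h.of_map hT.aemeasurable

section SampleVariance

variable {ι : Type*} [Fintype ι]

noncomputable def sampleMean (x : ι → ℝ) : ℝ := (Fintype.card ι : ℝ)⁻¹ * ∑ i, x i

noncomputable def sampleVariance (x : ι → ℝ) : ℝ :=
  ((Fintype.card ι : ℝ) - 1)⁻¹ * ∑ i, (x i - sampleMean x) ^ 2

lemma card_mul_sampleMean (x : ι → ℝ) : Fintype.card ι * sampleMean x = ∑ i, x i := by
  rcases isEmpty_or_nonempty ι with _ | _
  · simp
  · simp [sampleMean]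

lemma sum_sq_sub_sampleMean (x : ι → ℝ) (c : ℝ) :
    ∑ i, (x i - sampleMean x) ^ 2 =
      ∑ i, (x i - c) ^ 2 - Fintype.card ι * (sampleMean x - c) ^ 2 := by
  have hsplit : ∀ i, (x i - c) ^ 2 =
      (x i - sampleMean x) ^ 2 + 2 * (sampleMean x - c) * x i
        - 2 * (sampleMean x - c) * sampleMean x + (sampleMean x - c) ^ 2 := fun i => by ring
  simp only [hsplit, Finset.sum_add_distrib, Finset.sum_sub_distrib, ← Finset.mul_sum,
    Finset.sum_const, Finset.card_univ, nsmul_eq_mul, ← card_mul_sampleMean x]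
  ring

lemma sampleMean_mem_Icc [Nonempty ι] {A B : ℝ} {x : ι → ℝ} (hx : ∀ i, x i ∈ Set.Icc A B) :
    sampleMean x ∈ Set.Icc A B := by
  have hn : (0 : ℝ) < Fintype.card ι := by exact_mod_cast Fintype.card_pos
  have hsum := card_mul_sampleMean x
  have hA : ∑ _i : ι, A ≤ ∑ i, x i := Finset.sum_le_sum fun i _ => (hx i).1
  have hB : ∑ i, x i ≤ ∑ _i : ι, B := Finset.sum_le_sum fun i _ => (hx i).2
  simp only [Finset.sum_const, Finset.card_univ, nsmul_eq_mul] at hA hB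
  constructor <;> nlinarith

lemma sum_sq_sub_sampleMean_le_add {A B : ℝ} {x x' : ι → ℝ} (hx : ∀ j, x j ∈ Set.Icc A B)
    (hx' : ∀ j, x' j ∈ Set.Icc A B) {i : ι} (hxx' : ∀ j, j ≠ i → x j = x' j) :
    ∑ j, (x j - sampleMean x) ^ 2 ≤ ∑ j, (x' j - sampleMean x') ^ 2 + (B - A) ^ 2 := by
  have : Nonempty ι := ⟨i⟩
  set m' := sampleMean x'
  have hm' := sampleMean_mem_Icc hx'
  have hdiff : ∑ j, (x j - m') ^ 2 - ∑ j, (x' j - m') ^ 2 = (x i - m') ^ 2 - (x' i - m') ^ 2 := by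
    rw [← Finset.sum_sub_distrib]
    exact Finset.sum_eq_single i (fun j _ hj => by rw [hxx' j hj, sub_self]) (by simp)
  have hxi : (x i - m') ^ 2 ≤ (B - A) ^ 2 := by
    nlinarith [(hx i).1, (hx i).2, hm'.1, hm'.2]
  have hcentre := mul_nonneg (Nat.cast_nonneg (α := ℝ) (Fintype.card ι))
    (sq_nonneg (sampleMean x - m'))
  rw [sum_sq_sub_sampleMean x m', sum_sq_sub_sampleMean x' m', sub_self]
  nlinarith [sq_nonneg (x' i - m')]

lemma abs_sampleVariance_sub_le {A B : ℝ} {x x' : ι → ℝ} (hx : ∀ j, x j ∈ Set.Icc A B)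
    (hx' : ∀ j, x' j ∈ Set.Icc A B) {i : ι} (hxx' : ∀ j, j ≠ i → x j = x' j) :
    |sampleVariance x - sampleVariance x'| ≤ (B - A) ^ 2 / (Fintype.card ι - 1) := by
  have hcard : (0 : ℝ) ≤ Fintype.card ι - 1 := by
    have : 1 ≤ Fintype.card ι := Fintype.card_pos_iff.2 ⟨i⟩
    simpa using (Nat.one_le_cast (α := ℝ)).2 this
  have h₁ := sum_sq_sub_sampleMean_le_add hx hx' hxx'
  have h₂ := sum_sq_sub_sampleMean_le_add hx' hx fun j hj => (hxx' j hj).symm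
  rw [sampleVariance, sampleVariance, ← mul_sub, abs_mul, abs_of_nonneg (inv_nonneg.2 hcard),
    div_eq_inv_mul]
  gcongr
  exact abs_sub_le_iff.2 ⟨by linarith, by linarith⟩

variable {Ω : Type*} [MeasurableSpace Ω] {μ : Measure Ω}

lemma memLp_sampleMean {X : ι → Ω → ℝ} (hX : ∀ i, MemLp (X i) 2 μ) :
    MemLp (fun ω => sampleMean fun i => X i ω) 2 μ :=
  (memLp_finsetSum Finset.univ fun i _ => hX i).const_mul _

lemma integral_sampleMean {X : ι → Ω → ℝ} (hX : ∀ i, Integrable (X i) μ) :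
    μ[fun ω => sampleMean fun i => X i ω] = sampleMean fun i => μ[X i] := by
  simp only [sampleMean]
  rw [integral_const_mul, integral_finsetSum _ fun i _ => hX i]

lemma variance_sampleMean {X : ι → Ω → ℝ} (hX : ∀ i, MemLp (X i) 2 μ)
    (hindep : Pairwise fun i j => IndepFun (X i) (X j) μ) :
    Var[fun ω => sampleMean fun i => X i ω; μ] =
      (Fintype.card ι : ℝ)⁻¹ ^ 2 * ∑ i, Var[X i; μ] := by
  simp only [sampleMean]
  rw [variance_const_mul, ← IndepFun.variance_sum (fun i _ => hX i)
    (fun i _ j _ hij => hindep hij)]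
  congr 2
  ext ω
  simp

lemma integral_sum_sq_sub_sampleMean [IsProbabilityMeasure μ] [Nonempty ι] {X : ι → Ω → ℝ}
    (hX : ∀ i, MemLp (X i) 2 μ) (hindep : Pairwise fun i j => IndepFun (X i) (X j) μ) {m v : ℝ}
    (hm : ∀ i, μ[X i] = m)
    (hv : ∀ i, Var[X i; μ] = v) :
    ∫ ω, ∑ i, (X i ω - sampleMean fun j => X j ω) ^ 2 ∂μ = (Fintype.card ι - 1) * v := by
  have hn : (Fintype.card ι : ℝ) ≠ 0 := by exact_mod_cast Fintype.card_ne_zero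
  have hmean : μ[fun ω => sampleMean fun i => X i ω] = m := by
    rw [integral_sampleMean fun i => (hX i).integrable one_le_two]
    simp only [hm, sampleMean, Finset.sum_const, Finset.card_univ, nsmul_eq_mul]
    field_simp
  have hterm : ∀ i, ∫ ω, (X i ω - m) ^ 2 ∂μ = v := fun i => by
    rw [← hv i, variance_eq_integral (hX i).aemeasurable, hm i]
  have hmean_sq : ∫ ω, ((sampleMean fun i => X i ω) - m) ^ 2 ∂μ = v / Fintype.card ι := by
    rw [← hmean, ← variance_eq_integral (memLp_sampleMean hX).aemeasurable,
      variance_sampleMean hX hindep]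
    simp only [hv, Finset.sum_const, Finset.card_univ, nsmul_eq_mul]
    field_simp
  have hint : ∀ i, Integrable (fun ω => (X i ω - m) ^ 2) μ := fun i =>
    ((hX i).sub (memLp_const m)).integrable_sq
  have hint_mean : Integrable (fun ω => ((sampleMean fun i => X i ω) - m) ^ 2) μ :=
    ((memLp_sampleMean hX).sub (memLp_const m)).integrable_sq
  simp_rw [sum_sq_sub_sampleMean _ m]
  rw [integral_sub (integrable_finsetSum _ fun i _ => hint i) (hint_mean.const_mul _),
    integral_finsetSum _ fun i _ => hint i, integral_const_mul, hmean_sq]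
  simp only [hterm, Finset.sum_const, Finset.card_univ, nsmul_eq_mul]
  field_simp

lemma integral_sampleVariance [IsProbabilityMeasure μ] (hι : 1 < Fintype.card ι) {X : ι → Ω → ℝ}
    (hX : ∀ i, MemLp (X i) 2 μ) (hindep : Pairwise fun i j => IndepFun (X i) (X j) μ) {m v : ℝ}
    (hm : ∀ i, μ[X i] = m) (hv : ∀ i, Var[X i; μ] = v) :
    μ[fun ω => sampleVariance fun i => X i ω] = v := by
  have : Nonempty ι := Fintype.card_pos_iff.1 (by omega)
  have hn : (Fintype.card ι : ℝ) - 1 ≠ 0 := by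
    rw [sub_ne_zero]; exact_mod_cast hι.ne'
  simp only [sampleVariance]
  rw [integral_const_mul, integral_sum_sq_sub_sampleMean hX hindep hm hv]
  field_simp

lemma measurable_sampleVariance : Measurable (sampleVariance : (ι → ℝ) → ℝ) := by
  unfold sampleVariance sampleMean
  fun_prop

lemma hasBoundedDifferences_sampleVariance {A B : ℝ} :
    HasBoundedDifferences (fun x : ι → Set.Icc A B => sampleVariance fun i => (x i : ℝ))
      fun _ => ((B - A) ^ 2 / (Fintype.card ι - 1)).toNNReal := fun _ x x' h =>
  (abs_sampleVariance_sub_le (fun i => (x i).2) (fun i => (x' i).2)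
    fun j hj => congrArg Subtype.val (h j hj)).trans (Real.le_coe_toNNReal _)

end SampleVariance

lemma hasSubgaussianMGF_sampleVariance {Ω : Type*} [MeasurableSpace Ω] {P : Measure Ω}
    [IsProbabilityMeasure P] {n : ℕ} {X : Fin n → Ω → ℝ} (hX : ∀ k, Measurable (X k))
    (hindep : iIndepFun X P) {A B : ℝ} (hAB : A ≤ B) (hbdd : ∀ k, ∀ᵐ ω ∂P, X k ω ∈ Set.Icc A B) :
    HasSubgaussianMGF
      (fun ω => (sampleVariance fun k => X k ω) - P[fun ω => sampleVariance fun k => X k ω])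
      (∑ _k : Fin n, (((B - A) ^ 2 / (n - 1)).toNNReal / 2) ^ 2) P := by
  -- Clamping into `[A, B]` changes nothing a.s. and makes the bounded-differences bound global.
  let Y : Fin n → Ω → Set.Icc A B := fun k ω => Set.projIcc A B hAB (X k ω)
  have hY : ∀ k, Measurable (Y k) := fun k => continuous_projIcc.measurable.comp (hX k)
  have hYX : (fun ω => sampleVariance fun k => (Y k ω : ℝ)) =ᵐ[P]
      fun ω => sampleVariance fun k => X k ω := by
    filter_upwards [ae_all_iff.2 hbdd] with ω hω
    simp [Y, Set.projIcc_of_mem _ (hω _)]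
  have hFm : Measurable fun x : Fin n → Set.Icc A B => sampleVariance fun k => (x k : ℝ) :=
    measurable_sampleVariance.comp (measurable_pi_lambda _ fun k =>
      measurable_subtype_coe.comp (measurable_pi_apply k))
  have h := hasBoundedDifferences_sampleVariance.hasSubgaussianMGF_of_iIndepFun hFm hY
    (hindep.comp _ fun _ => continuous_projIcc.measurable)
  rw [Fintype.card_fin] at h
  exact h.congr (hYX.mono fun ω hω => by simp only [hω, integral_congr_ae hYX])

/-- **Concentration of the unbiased sample variance.** For i.i.d. random variables
`X 1, …, X N` (`N ≥ 2`) taking values in `[A, B]` a.s., the unbiased variance estimator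
`σ̂² = (1/(N-1))·∑ (X k - μ̂)²` satisfies, for every `ε > 0`,
`P(|σ̂² - σ²| > ε) ≤ 2·exp(-2(N-1)²ε² / (N(B-A)⁴))`. -/
theorem stmt8 {Ω : Type*} [MeasurableSpace Ω] (P : Measure Ω) [IsProbabilityMeasure P]
    (N : ℕ) (hN : 2 ≤ N)
    (X : Fin N → Ω → ℝ) (hmeas : ∀ k, Measurable (X k))
    (hindep : iIndepFun X P)
    (hident : ∀ k, IdentDistrib (X k) (X ⟨0, by omega⟩) P P)
    (A B : ℝ) (hAB : A < B)
    (hbdd : ∀ k, ∀ᵐ ω ∂P, X k ω ∈ Set.Icc A B)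
    (muhat : Ω → ℝ) (hmuhat : ∀ ω, muhat ω = (1 / (N : ℝ)) * ∑ k, X k ω)
    (σ2 : ℝ) (hσ2 : σ2 = variance (X ⟨0, by omega⟩) P)
    (sigmahat2 : Ω → ℝ)
    (hsig : ∀ ω, sigmahat2 ω = (1 / ((N : ℝ) - 1)) * ∑ k, (X k ω - muhat ω) ^ 2) :
    ∀ ε : ℝ, 0 < ε →
      P {ω | |sigmahat2 ω - σ2| > ε} ≤
        ENNReal.ofReal
          (2 * Real.exp (-(2 * ((N : ℝ) - 1) ^ 2 * ε ^ 2) / ((N : ℝ) * (B - A) ^ 4))) := by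
  intro ε hε
  have hsig' : ∀ ω, sigmahat2 ω = sampleVariance fun k => X k ω := fun ω => by
    simp [hsig, hmuhat, sampleVariance, sampleMean]
  have hmean : P[fun ω => sampleVariance fun k => X k ω] = σ2 := by
    rw [hσ2]
    exact integral_sampleVariance (by rw [Fintype.card_fin]; omega)
      (fun k => memLp_of_bounded (hbdd k) (hmeas k).aestronglyMeasurable 2)
      (fun i j hij => hindep.indepFun hij) (fun k => (hident k).integral_eq)
      (fun k => (hident k).variance_eq)
  have htail :=
    (hasSubgaussianMGF_sampleVariance hmeas hindep hAB.le hbdd).measureReal_abs_ge_le hε.le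
  rw [hmean] at htail
  simp only [← hsig'] at htail
  have hN' : (0 : ℝ) ≤ N - 1 := by
    have : (2 : ℝ) ≤ N := by exact_mod_cast hN
    linarith
  have hproxy : ((∑ _k : Fin N, (((B - A) ^ 2 / (N - 1)).toNNReal / 2) ^ 2 : ℝ≥0) : ℝ) =
      N * ((B - A) ^ 2 / (N - 1) / 2) ^ 2 := by
    simp [Real.coe_toNNReal _ (div_nonneg (sq_nonneg _) hN')]
  calc P {ω | |sigmahat2 ω - σ2| > ε}
      ≤ P {ω | ε ≤ |sigmahat2 ω - σ2|} := measure_mono fun ω (h : ε < _) => h.le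
    _ = ENNReal.ofReal (P.real {ω | ε ≤ |sigmahat2 ω - σ2|}) :=
        (ofReal_measureReal (measure_ne_top _ _)).symm
    _ ≤ _ := by
      refine ENNReal.ofReal_le_ofReal (htail.trans_eq ?_)
      rw [hproxy]
      congr 2
      field_simp
end
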